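/- Let Φ be a TH system on V. Let {v_i}_{i=0}^d be a basis of V and C (resp. C*) the matrix representing A (resp. A*) with respect to it. Then {v_i} is a Φ-split basis if and only if: (i) C is lower bidiagonal and C* is upper bidiagonal, (ii) C*_{i-1,i} = 1 for 1 ≤ i ≤ d, and (iii) C_{dd} = θ_0 and C*_{00} = θ*_0. -/

import Mathlib

/-!
Write `E_{≤m}` for `E_0 V + ⋯ + E_m V` and `E*_{≤m}` likewise. Each `E_i V` and `E*_i V` is a
line, so these have dimension `m + 1`, and a basis whose first `m + 1` vectors lie in `E*_{≤m}`
spans it. The Hessenberg conditions say that `A` maps `E*_{≤m}` into `E*_{≤m+1}`, and `A*` maps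
`E_{≤m}` into `E_{≤m+1}`.

For a split basis, `v_j ∈ E*_{≤j}` (since `A* - θ*_{j+1}` maps `E*_{≤j+1}` into `E*_{≤j}`) and
`v_j ∈ E_{≤d-j}`; this makes `C` lower and `C*` upper bidiagonal, and `C_{j+1,j} ≠ 0` because
`E*_{j+1} A E*_j ≠ 0`. Conversely, if `C` is lower bidiagonal then `v_j ∈ E*_{≤j}` by induction,
with `E*_j v_j ≠ 0` by counting dimensions, and comparing `E*_j`-components in
`A* v_j = v_{j-1} + C*_{jj} v_j` gives `C*_{jj} = θ*_j`, the recurrence of a split basis.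
-/

/-- A thin Hessenberg system on `V`: multiplicity-free `A`, `Astar` with
orderings of primitive idempotents `E`, `Estar` (eigenvalues `θ`, `θs`)
satisfying the Hessenberg conditions. -/
structure THSystem (K V : Type*) [Field K] [AddCommGroup V] [Module K V] (d : ℕ) where
  A : Module.End K V
  Astar : Module.End K V
  E : Fin (d + 1) → Module.End K V
  Estar : Fin (d + 1) → Module.End K V
  θ : Fin (d + 1) → K
  θs : Fin (d + 1) → K
  finrank_eq : Module.finrank K V = d + 1
  θ_inj : Function.Injective θ
  θs_inj : Function.Injective θs
  sum_E : ∑ i, E i = 1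
  E_mul : ∀ i j, E i * E j = if i = j then E i else 0
  E_ne : ∀ i, E i ≠ 0
  sum_Es : ∑ i, Estar i = 1
  Es_mul : ∀ i j, Estar i * Estar j = if i = j then Estar i else 0
  Es_ne : ∀ i, Estar i ≠ 0
  A_eq : A = ∑ i, θ i • E i
  As_eq : Astar = ∑ i, θs i • Estar i
  EAsE_zero : ∀ i j : Fin (d + 1), (j : ℕ) + 1 < (i : ℕ) → E i * Astar * E j = 0
  EAsE_ne : ∀ i j : Fin (d + 1), (i : ℕ) = (j : ℕ) + 1 → E i * Astar * E j ≠ 0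
  EsAEs_zero : ∀ i j : Fin (d + 1), (j : ℕ) + 1 < (i : ℕ) → Estar i * A * Estar j = 0
  EsAEs_ne : ∀ i j : Fin (d + 1), (i : ℕ) = (j : ℕ) + 1 → Estar i * A * Estar j ≠ 0
/-- `v` has the form of a `Φ`-split basis:
`v_d` is a nonzero element of `E_0 V` and `v_i = (A* - θ*_{i+1} I) v_{i+1}`. -/
def IsSplitFamily {K V : Type*} [Field K] [AddCommGroup V] [Module K V] {d : ℕ}
    (Φ : THSystem K V d) (v : Fin (d + 1) → V) : Prop :=
  v (Fin.last d) ≠ 0 ∧ v (Fin.last d) ∈ LinearMap.range (Φ.E 0) ∧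
  ∀ i : ℕ, ∀ h : i < d, v ⟨i, by omega⟩ =
    (Φ.Astar - Φ.θs ⟨i + 1, by omega⟩ • (1 : Module.End K V)) (v ⟨i + 1, by omega⟩)

/-- A `Φ`-split basis for `V`. -/
def IsSplitBasis {K V : Type*} [Field K] [AddCommGroup V] [Module K V] {d : ℕ}
    (Φ : THSystem K V d) (v : Fin (d + 1) → V) : Prop :=
  LinearIndependent K v ∧ Submodule.span K (Set.range v) = ⊤ ∧ IsSplitFamily Φ v
/-- A square matrix is lower bidiagonal whenever each nonzero entry lies on the
diagonal or the subdiagonal, and each subdiagonal entry is nonzero. -/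
def IsLowerBidiagonal {K : Type*} [Field K] {n : ℕ} (C : Matrix (Fin n) (Fin n) K) : Prop :=
  (∀ i j : Fin n, (i : ℕ) ≠ (j : ℕ) → (i : ℕ) ≠ (j : ℕ) + 1 → C i j = 0) ∧
  (∀ i j : Fin n, (i : ℕ) = (j : ℕ) + 1 → C i j ≠ 0)

/-- A square matrix is upper bidiagonal whenever its transpose is lower bidiagonal. -/
def IsUpperBidiagonal {K : Type*} [Field K] {n : ℕ} (C : Matrix (Fin n) (Fin n) K) : Prop :=
  IsLowerBidiagonal C.transpose

open Module

section

variable {K V : Type*} [Field K] [AddCommGroup V] [Module K V]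

namespace Module.Basis

variable {ι : Type*} (b : Basis ι K V) {s : Finset ι} {p : Submodule K V}

theorem card_le_finrank_of_forall_mem [FiniteDimensional K p] (hb : ∀ i ∈ s, b i ∈ p) :
    s.card ≤ finrank K p := by
  have hli : LinearIndependent K (fun i : s => (⟨b i, hb i i.2⟩ : p)) :=
    LinearIndependent.of_comp p.subtype (b.linearIndependent.comp _ Subtype.val_injective)
  simpa using hli.fintype_card_le_finrank

theorem span_image_eq_of_finrank_le [FiniteDimensional K V] (hb : ∀ i ∈ s, b i ∈ p)
    (hp : finrank K p ≤ s.card) : Submodule.span K (b '' s) = p := by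
  refine Submodule.eq_of_le_of_finrank_le (Submodule.span_le.2 ?_) ?_
  · rintro _ ⟨i, hi, rfl⟩
    exact hb i hi
  · exact hp.trans (b.card_le_finrank_of_forall_mem fun i hi => Submodule.subset_span ⟨i, hi, rfl⟩)

theorem repr_eq_zero_of_mem_of_finrank_le [FiniteDimensional K V] (hb : ∀ i ∈ s, b i ∈ p)
    (hp : finrank K p ≤ s.card) {x : V} (hx : x ∈ p) {i : ι} (hi : i ∉ s) : b.repr x i = 0 := by
  rw [← b.span_image_eq_of_finrank_le hb hp, Basis.mem_span_image] at hx
  exact Finsupp.notMem_support_iff.1 fun h => hi (hx h)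

end Module.Basis

namespace CompleteOrthogonalIdempotents

variable {ι : Type*} [Fintype ι] {E : ι → Module.End K V}

theorem apply_apply [DecidableEq ι] (hE : CompleteOrthogonalIdempotents E) (i j : ι) (x : V) :
    E i (E j x) = if i = j then E j x else 0 := by
  have h := congr($(hE.mul_eq i j) x)
  split_ifs at h ⊢ with hij
  · subst hij; exact h
  · exact h

theorem sum_apply (hE : CompleteOrthogonalIdempotents E) (x : V) : ∑ i, E i x = x := by
  simpa using congr($(hE.complete) x)

theorem apply_eq_self_of_forall_ne (hE : CompleteOrthogonalIdempotents E) {j : ι} {x : V}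
    (h : ∀ k ≠ j, E k x = 0) : E j x = x := by
  rw [← Fintype.sum_eq_single j h, hE.sum_apply]

theorem apply_sum_smul_apply [DecidableEq ι] (hE : CompleteOrthogonalIdempotents E) (θ : ι → K)
    (k : ι) (x : V) : E k ((∑ i, θ i • E i) x) = θ k • E k x := by
  simp [map_sum, hE.apply_apply]

theorem sum_smul_apply_eq_smul_iff [DecidableEq ι] (hE : CompleteOrthogonalIdempotents E)
    {θ : ι → K} (hθ : Function.Injective θ) {j : ι} {x : V} :
    (∑ i, θ i • E i) x = θ j • x ↔ ∀ k ≠ j, E k x = 0 := by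
  constructor
  · intro h k hk
    have h' := congr(E k $h)
    rw [hE.apply_sum_smul_apply, map_smul, ← sub_eq_zero, ← sub_smul] at h'
    exact (smul_eq_zero.1 h').resolve_left (sub_ne_zero.2 (hθ.ne hk))
  · intro h
    rw [LinearMap.sum_apply, Fintype.sum_eq_single j (fun k hk => by simp [h k hk]),
      LinearMap.smul_apply, hE.apply_eq_self_of_forall_ne h]

theorem exists_basis_apply_eq_smul [DecidableEq ι] [FiniteDimensional K V]
    (hE : CompleteOrthogonalIdempotents E) (hne : ∀ i, E i ≠ 0)
    (hrank : finrank K V = Fintype.card ι) :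
    ∃ w : Basis ι K V, ∀ i x, E i x = w.repr x i • w i := by
  have hex : ∀ i, ∃ x, E i x ≠ 0 := fun i => by
    by_contra! h
    exact hne i (LinearMap.ext h)
  choose x₀ hx₀ using hex
  have hli : LinearIndependent K fun i => E i (x₀ i) := by
    rw [Fintype.linearIndependent_iff]
    intro c hc j
    have h := congr(E j $hc)
    simp only [map_sum, map_smul, hE.apply_apply, smul_ite, smul_zero, Finset.sum_ite_eq,
      Finset.mem_univ, if_true, map_zero] at h
    exact (smul_eq_zero.1 h).resolve_right (hx₀ j)
  set w := basisOfLinearIndependentOfCardEqFinrank' _ hli hrank.symm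
  refine ⟨w, fun i x => ?_⟩
  conv_lhs => rw [← w.sum_repr x]
  simp [w, map_sum, hE.apply_apply]

end CompleteOrthogonalIdempotents

section IdempotentFlag

variable {n : ℕ} {E : Fin n → Module.End K V}

/-- `E 0 V + ⋯ + E m V`, encoded as the common kernel of the `E k` with `k > m`; the two agree
when the `E k` are complete orthogonal idempotents. -/
def idempotentFlag (E : Fin n → Module.End K V) (m : ℕ) : Submodule K V :=
  ⨅ (k : Fin n) (_ : m < (k : ℕ)), LinearMap.ker (E k)

theorem mem_idempotentFlag {m : ℕ} {x : V} :
    x ∈ idempotentFlag E m ↔ ∀ k : Fin n, m < (k : ℕ) → E k x = 0 := by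
  simp [idempotentFlag]

theorem idempotentFlag_mono {m m' : ℕ} (h : m ≤ m') : idempotentFlag E m ≤ idempotentFlag E m' :=
  fun _ hx => mem_idempotentFlag.2 fun k hk => mem_idempotentFlag.1 hx k (by omega)

namespace CompleteOrthogonalIdempotents

theorem apply_mem_idempotentFlag (hE : CompleteOrthogonalIdempotents E) {j : Fin n} {m : ℕ}
    (hj : (j : ℕ) ≤ m) (x : V) : E j x ∈ idempotentFlag E m :=
  mem_idempotentFlag.2 fun k hk => by
    rw [hE.apply_apply, if_neg (Fin.ne_of_val_ne (by omega))]

theorem sum_smul_apply_mem_idempotentFlag (hE : CompleteOrthogonalIdempotents E) (θ : Fin n → K)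
    {m : ℕ} {x : V} (hx : x ∈ idempotentFlag E m) : (∑ i, θ i • E i) x ∈ idempotentFlag E m :=
  mem_idempotentFlag.2 fun k hk => by
    rw [hE.apply_sum_smul_apply, mem_idempotentFlag.1 hx k hk, smul_zero]

theorem sum_smul_sub_smul_one_apply_mem_idempotentFlag (hE : CompleteOrthogonalIdempotents E)
    (θ : Fin n → K) {m : ℕ} {x : V} (hx : x ∈ idempotentFlag E (m + 1)) {j : Fin n}
    (hj : (j : ℕ) = m + 1) :
    ((∑ i, θ i • E i) - θ j • 1) x ∈ idempotentFlag E m := by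
  refine mem_idempotentFlag.2 fun k hk => ?_
  rw [LinearMap.sub_apply, map_sub, hE.apply_sum_smul_apply, LinearMap.smul_apply,
    Module.End.one_apply, map_smul, ← sub_smul]
  rcases eq_or_ne k j with rfl | hkj
  · rw [sub_self, zero_smul]
  · rw [mem_idempotentFlag.1 hx k (by have := Fin.val_ne_of_ne hkj; omega), smul_zero]

theorem apply_mem_idempotentFlag_succ (hE : CompleteOrthogonalIdempotents E)
    {B : Module.End K V} (hB : ∀ i j : Fin n, (j : ℕ) + 1 < i → E i * B * E j = 0) {m : ℕ}
    {x : V} (hx : x ∈ idempotentFlag E m) : B x ∈ idempotentFlag E (m + 1) := by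
  refine mem_idempotentFlag.2 fun k hk => ?_
  rw [← hE.sum_apply x, map_sum, map_sum]
  refine Finset.sum_eq_zero fun l _ => ?_
  rcases le_or_gt (l : ℕ) m with hl | hl
  · exact congr($(hB k l (by omega)) x)
  · rw [mem_idempotentFlag.1 hx l hl, map_zero, map_zero]

theorem finrank_idempotentFlag_le [FiniteDimensional K V] (hE : CompleteOrthogonalIdempotents E)
    (hne : ∀ i, E i ≠ 0) (hrank : finrank K V = n) (m : ℕ) :
    finrank K (idempotentFlag E m) ≤ m + 1 := by
  obtain ⟨w, hw⟩ := hE.exists_basis_apply_eq_smul hne (by simpa using hrank)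
  let low := {k : Fin n // (k : ℕ) ≤ m}
  have hle : idempotentFlag E m ≤ Submodule.span K (Set.range fun k : low => w k) := by
    intro x hx
    rw [Set.range_comp' w, Subtype.range_coe_subtype, w.mem_span_image]
    intro k hk
    by_contra hkm
    have h := mem_idempotentFlag.1 hx k (by simpa using hkm)
    rw [hw, smul_eq_zero] at h
    exact h.elim (Finsupp.mem_support_iff.1 hk) (w.ne_zero k)
  calc finrank K (idempotentFlag E m)
      ≤ finrank K (Submodule.span K (Set.range fun k : low => w k)) := Submodule.finrank_mono hle
    _ ≤ Fintype.card low := finrank_range_le_card _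
    _ ≤ m + 1 := by
      simpa using Fintype.card_le_of_injective (fun k : low => (⟨k.1, by omega⟩ : Fin (m + 1)))
        fun a b h => Subtype.ext (Fin.ext (by simpa using congr(Fin.val $h)))

/-- Otherwise `b 0, …, b j` would be `j + 1` independent vectors in `E 0 V + ⋯ + E (j - 1) V`. -/
theorem apply_basis_ne_zero_of_mem_idempotentFlag [FiniteDimensional K V]
    (hE : CompleteOrthogonalIdempotents E) (hne : ∀ i, E i ≠ 0) (hrank : finrank K V = n)
    (b : Basis (Fin n) K V) (hb : ∀ l : Fin n, b l ∈ idempotentFlag E l) {j : Fin n}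
    (hj : 0 < (j : ℕ)) : E j (b j) ≠ 0 := by
  intro h0
  have hmem : ∀ l ∈ Finset.Iic j, b l ∈ idempotentFlag E (j - 1) := by
    intro l hl
    rcases (Finset.mem_Iic.1 hl).lt_or_eq with hlj | rfl
    · exact idempotentFlag_mono (by have := Fin.lt_def.1 hlj; omega) (hb l)
    · refine mem_idempotentFlag.2 fun k hk => ?_
      rcases eq_or_ne k l with rfl | hkl
      · exact h0
      · exact mem_idempotentFlag.1 (hb l) k (by have := Fin.val_ne_of_ne hkl; omega)
  have := (b.card_le_finrank_of_forall_mem hmem).trans (hE.finrank_idempotentFlag_le hne hrank _)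
  rw [Fin.card_Iic] at this
  omega

end CompleteOrthogonalIdempotents

end IdempotentFlag

section Bidiagonal

variable {d : ℕ} (b : Basis (Fin (d + 1)) K V) (f : Module.End K V)

theorem apply_basis_eq_sum_toMatrix (j : Fin (d + 1)) :
    f (b j) = ∑ i, LinearMap.toMatrix b b f i j • b i := by
  conv_lhs => rw [← Matrix.toLin_toMatrix b b f]
  exact Matrix.toLin_self _ _ _ _

variable {b f}

theorem apply_basis_castSucc_of_isLowerBidiagonal
    (hf : IsLowerBidiagonal (LinearMap.toMatrix b b f)) (j : Fin d) :
    f (b j.castSucc) = LinearMap.toMatrix b b f j.castSucc j.castSucc • b j.castSucc +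
      LinearMap.toMatrix b b f j.succ j.castSucc • b j.succ := by
  rw [apply_basis_eq_sum_toMatrix, Fintype.sum_eq_add _ _ j.castSucc_lt_succ.ne]
  rintro i ⟨h₁, h₂⟩
  rw [hf.1 i _ (Fin.val_ne_of_ne h₁) (fun h => h₂ (Fin.ext (by simpa using h))), zero_smul]

theorem apply_basis_last_of_isLowerBidiagonal
    (hf : IsLowerBidiagonal (LinearMap.toMatrix b b f)) :
    f (b (Fin.last d)) = LinearMap.toMatrix b b f (Fin.last d) (Fin.last d) • b (Fin.last d) := by
  rw [apply_basis_eq_sum_toMatrix, Fintype.sum_eq_single]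
  intro i hi
  rw [hf.1 i _ (Fin.val_ne_of_ne hi) (by simp; omega), zero_smul]

theorem apply_basis_succ_of_isUpperBidiagonal
    (hf : IsUpperBidiagonal (LinearMap.toMatrix b b f)) (j : Fin d) :
    f (b j.succ) = LinearMap.toMatrix b b f j.castSucc j.succ • b j.castSucc +
      LinearMap.toMatrix b b f j.succ j.succ • b j.succ := by
  rw [apply_basis_eq_sum_toMatrix, Fintype.sum_eq_add _ _ j.castSucc_lt_succ.ne]
  rintro i ⟨h₁, h₂⟩
  rw [← Matrix.transpose_apply (LinearMap.toMatrix b b f),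
    hf.1 _ i (fun h => h₂ (Fin.ext h.symm)) (fun h => h₁ (Fin.ext (by simp at h ⊢; omega))),
    zero_smul]

theorem apply_basis_zero_of_isUpperBidiagonal
    (hf : IsUpperBidiagonal (LinearMap.toMatrix b b f)) :
    f (b 0) = LinearMap.toMatrix b b f 0 0 • b 0 := by
  rw [apply_basis_eq_sum_toMatrix, Fintype.sum_eq_single]
  intro i hi
  rw [← Matrix.transpose_apply (LinearMap.toMatrix b b f),
    hf.1 _ i (Fin.val_ne_of_ne hi.symm) (by simp), zero_smul]

end Bidiagonal

namespace THSystem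

theorem finiteDimensional {d : ℕ} (Φ : THSystem K V d) : FiniteDimensional K V :=
  Module.finite_of_finrank_eq_succ Φ.finrank_eq

variable {d : ℕ} (Φ : THSystem K V d)

theorem completeOrthogonalIdempotents_E : CompleteOrthogonalIdempotents Φ.E :=
  ⟨OrthogonalIdempotents.iff_mul_eq.2 Φ.E_mul, Φ.sum_E⟩

theorem completeOrthogonalIdempotents_Estar : CompleteOrthogonalIdempotents Φ.Estar :=
  ⟨OrthogonalIdempotents.iff_mul_eq.2 Φ.Es_mul, Φ.sum_Es⟩

theorem finrank_idempotentFlag_E_le (m : ℕ) : finrank K (idempotentFlag Φ.E m) ≤ m + 1 :=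
  have := Φ.finiteDimensional
  Φ.completeOrthogonalIdempotents_E.finrank_idempotentFlag_le Φ.E_ne Φ.finrank_eq m

theorem finrank_idempotentFlag_Estar_le (m : ℕ) :
    finrank K (idempotentFlag Φ.Estar m) ≤ m + 1 :=
  have := Φ.finiteDimensional
  Φ.completeOrthogonalIdempotents_Estar.finrank_idempotentFlag_le Φ.Es_ne Φ.finrank_eq m

end THSystem

namespace IsSplitFamily

variable {d : ℕ} {Φ : THSystem K V d}

section Family

variable {v : Fin (d + 1) → V}

theorem apply_castSucc (h : IsSplitFamily Φ v) (i : Fin d) :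
    v i.castSucc = (Φ.Astar - Φ.θs i.succ • 1) (v i.succ) :=
  h.2.2 i i.isLt

theorem mem_idempotentFlag_Estar (h : IsSplitFamily Φ v) (j : Fin (d + 1)) :
    v j ∈ idempotentFlag Φ.Estar j := by
  induction j using Fin.reverseInduction with
  | last => exact mem_idempotentFlag.2 fun k hk => absurd k.isLt (by simp at hk; omega)
  | cast i ih =>
    rw [h.apply_castSucc, Φ.As_eq]
    exact Φ.completeOrthogonalIdempotents_Estar.sum_smul_sub_smul_one_apply_mem_idempotentFlag _
      ih rfl

theorem mem_idempotentFlag_E (h : IsSplitFamily Φ v) (j : Fin (d + 1)) :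
    v j ∈ idempotentFlag Φ.E (d - j) := by
  induction j using Fin.reverseInduction with
  | last =>
    obtain ⟨y, hy⟩ := h.2.1
    rw [← hy]
    exact Φ.completeOrthogonalIdempotents_E.apply_mem_idempotentFlag (by simp) y
  | cast i ih =>
    have hd : d - (i.succ : ℕ) + 1 = d - i.castSucc := by simp; omega
    rw [h.apply_castSucc, LinearMap.sub_apply, ← hd]
    exact Submodule.sub_mem _
      (Φ.completeOrthogonalIdempotents_E.apply_mem_idempotentFlag_succ Φ.EAsE_zero ih)
      (idempotentFlag_mono (Nat.le_succ _) (Submodule.smul_mem _ _ ih))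

end Family

variable {b : Basis (Fin (d + 1)) K V}

theorem span_eq_idempotentFlag_Estar (h : IsSplitFamily Φ b) (j : Fin (d + 1)) :
    Submodule.span K (b '' Finset.Iic j) = idempotentFlag Φ.Estar j :=
  have := Φ.finiteDimensional
  b.span_image_eq_of_finrank_le
    (fun l hl => idempotentFlag_mono (Fin.le_def.1 (Finset.mem_Iic.1 hl))
      (h.mem_idempotentFlag_Estar l))
    (by simpa using Φ.finrank_idempotentFlag_Estar_le j)

theorem repr_eq_zero_of_mem_idempotentFlag_Estar (h : IsSplitFamily Φ b) {m : ℕ} {x : V}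
    (hx : x ∈ idempotentFlag Φ.Estar m) {i : Fin (d + 1)} (hi : m < i) : b.repr x i = 0 := by
  have hm : m < d + 1 := hi.trans i.isLt
  rw [← h.span_eq_idempotentFlag_Estar ⟨m, hm⟩, b.mem_span_image] at hx
  refine Finsupp.notMem_support_iff.1 fun hs => ?_
  have := Fin.le_def.1 (Finset.mem_Iic.1 (hx hs))
  simp only at this
  omega

theorem repr_eq_zero_of_mem_idempotentFlag_E (h : IsSplitFamily Φ b) {j : Fin (d + 1)} {x : V}
    (hx : x ∈ idempotentFlag Φ.E (d - j)) {i : Fin (d + 1)} (hi : i < j) : b.repr x i = 0 :=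
  have := Φ.finiteDimensional
  b.repr_eq_zero_of_mem_of_finrank_le
    (fun l hl => idempotentFlag_mono (by have := Fin.le_def.1 (Finset.mem_Ici.1 hl); omega)
      (h.mem_idempotentFlag_E l))
    (by simpa [Nat.sub_add_comm (Nat.le_of_lt_succ j.isLt)] using
      Φ.finrank_idempotentFlag_E_le (d - j)) hx
    (fun hi' => (Finset.mem_Ici.1 hi').not_gt hi)

theorem toMatrix_A_eq_zero_of_succ_lt (h : IsSplitFamily Φ b) {i j : Fin (d + 1)}
    (hij : (j : ℕ) + 1 < i) : LinearMap.toMatrix b b Φ.A i j = 0 := by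
  rw [LinearMap.toMatrix_apply]
  exact h.repr_eq_zero_of_mem_idempotentFlag_Estar
    (Φ.completeOrthogonalIdempotents_Estar.apply_mem_idempotentFlag_succ Φ.EsAEs_zero
      (h.mem_idempotentFlag_Estar j)) hij

theorem toMatrix_A_eq_zero_of_lt (h : IsSplitFamily Φ b) {i j : Fin (d + 1)} (hij : i < j) :
    LinearMap.toMatrix b b Φ.A i j = 0 := by
  rw [LinearMap.toMatrix_apply, Φ.A_eq]
  exact h.repr_eq_zero_of_mem_idempotentFlag_E
    (Φ.completeOrthogonalIdempotents_E.sum_smul_apply_mem_idempotentFlag _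
      (h.mem_idempotentFlag_E j)) hij

/-- If the subdiagonal entry vanished, `A` would preserve `E*_0 V + ⋯ + E*_j V`, forcing
`E*_{j+1} A E*_j = 0`. -/
theorem toMatrix_A_ne_zero (h : IsSplitFamily Φ b) {i j : Fin (d + 1)} (hij : (i : ℕ) = j + 1) :
    LinearMap.toMatrix b b Φ.A i j ≠ 0 := by
  intro h0
  have hA : ∀ l ∈ Finset.Iic j, Φ.A (b l) ∈ Submodule.span K (b '' Finset.Iic j) := by
    intro l hl
    have hl : (l : ℕ) ≤ j := Fin.le_def.1 (Finset.mem_Iic.1 hl)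
    refine b.mem_span_image.2 fun r hr => ?_
    have hr : LinearMap.toMatrix b b Φ.A r l ≠ 0 := by
      rwa [LinearMap.toMatrix_apply, ← Finsupp.mem_support_iff]
    rw [Finset.mem_coe, Finset.mem_Iic, Fin.le_def]
    by_contra hrj
    by_cases hrl : (l : ℕ) + 1 < r
    · exact hr (h.toMatrix_A_eq_zero_of_succ_lt hrl)
    · obtain rfl : r = i := Fin.ext (by omega)
      obtain rfl : l = j := Fin.ext (by omega)
      exact hr h0
  have hinv : Submodule.span K (b '' Finset.Iic j) ≤
      (Submodule.span K (b '' Finset.Iic j)).comap Φ.A :=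
    Submodule.span_le.2 fun _ ⟨l, hl, hx⟩ => hx ▸ hA l hl
  rw [h.span_eq_idempotentFlag_Estar j] at hinv
  refine Φ.EsAEs_ne i j hij (LinearMap.ext fun x => ?_)
  exact mem_idempotentFlag.1
    (hinv (Φ.completeOrthogonalIdempotents_Estar.apply_mem_idempotentFlag le_rfl x)) i (by omega)

theorem A_apply_last (h : IsSplitFamily Φ b) : Φ.A (b (Fin.last d)) = Φ.θ 0 • b (Fin.last d) := by
  obtain ⟨y, hy⟩ := h.2.1
  rw [Φ.A_eq, Φ.completeOrthogonalIdempotents_E.sum_smul_apply_eq_smul_iff Φ.θ_inj, ← hy]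
  intro k hk
  rw [Φ.completeOrthogonalIdempotents_E.apply_apply, if_neg hk]

theorem Astar_apply_zero (h : IsSplitFamily Φ b) : Φ.Astar (b 0) = Φ.θs 0 • b 0 := by
  rw [Φ.As_eq, Φ.completeOrthogonalIdempotents_Estar.sum_smul_apply_eq_smul_iff Φ.θs_inj]
  exact fun k hk => mem_idempotentFlag.1 (h.mem_idempotentFlag_Estar 0) k
    (Nat.pos_of_ne_zero (Fin.val_ne_of_ne hk))

theorem Astar_apply_succ (h : IsSplitFamily Φ b) (i : Fin d) :
    Φ.Astar (b i.succ) = b i.castSucc + Φ.θs i.succ • b i.succ := by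
  rw [h.apply_castSucc]
  simp

theorem toMatrix_Astar_apply (h : IsSplitFamily Φ b) (r c : Fin (d + 1)) :
    LinearMap.toMatrix b b Φ.Astar r c =
      if (r : ℕ) + 1 = c then 1 else if r = c then Φ.θs c else 0 := by
  rw [LinearMap.toMatrix_apply]
  induction c using Fin.cases with
  | zero => simp [h.Astar_apply_zero, Finsupp.single_apply, eq_comm]
  | succ i =>
    rw [h.Astar_apply_succ]
    simp only [map_add, map_smul, Basis.repr_self, Finsupp.add_apply, Finsupp.smul_apply,
      Finsupp.single_apply, smul_eq_mul, Fin.ext_iff, Fin.val_castSucc, Fin.val_succ]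
    split_ifs <;> first | omega | simp

theorem isLowerBidiagonal_toMatrix_A (h : IsSplitFamily Φ b) :
    IsLowerBidiagonal (LinearMap.toMatrix b b Φ.A) := by
  refine ⟨fun i j h₁ h₂ => ?_, fun i j hij => h.toMatrix_A_ne_zero hij⟩
  rcases lt_or_gt_of_ne h₁ with hij | hij
  · exact h.toMatrix_A_eq_zero_of_lt hij
  · exact h.toMatrix_A_eq_zero_of_succ_lt (by omega)

theorem isUpperBidiagonal_toMatrix_Astar (h : IsSplitFamily Φ b) :
    IsUpperBidiagonal (LinearMap.toMatrix b b Φ.Astar) := by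
  refine ⟨fun i j h₁ h₂ => ?_, fun i j hij => ?_⟩ <;>
    rw [Matrix.transpose_apply, h.toMatrix_Astar_apply]
  · rw [if_neg (by omega), if_neg (fun h => h₁ congr(Fin.val $h).symm)]
  · rw [if_pos hij.symm]
    exact one_ne_zero

end IsSplitFamily

namespace THSystem

variable {d : ℕ} {Φ : THSystem K V d} {b : Basis (Fin (d + 1)) K V}

theorem mem_idempotentFlag_Estar_of_isLowerBidiagonal
    (hA : IsLowerBidiagonal (LinearMap.toMatrix b b Φ.A)) (h₀ : Φ.Astar (b 0) = Φ.θs 0 • b 0)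
    (j : Fin (d + 1)) : b j ∈ idempotentFlag Φ.Estar j := by
  have hE := Φ.completeOrthogonalIdempotents_Estar
  induction j using Fin.induction with
  | zero =>
    rw [Φ.As_eq, hE.sum_smul_apply_eq_smul_iff Φ.θs_inj] at h₀
    exact mem_idempotentFlag.2 fun k hk => h₀ k (Fin.ne_of_val_ne (by simp at hk ⊢; omega))
  | succ i ih =>
    have hsub := hA.2 i.succ i.castSucc (by simp)
    have hb : b i.succ = (LinearMap.toMatrix b b Φ.A i.succ i.castSucc)⁻¹ •
        (Φ.A (b i.castSucc) - LinearMap.toMatrix b b Φ.A i.castSucc i.castSucc • b i.castSucc) := by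
      rw [apply_basis_castSucc_of_isLowerBidiagonal hA, add_sub_cancel_left, smul_smul,
        inv_mul_cancel₀ hsub, one_smul]
    rw [hb]
    refine Submodule.smul_mem _ _ (Submodule.sub_mem _ ?_ ?_)
    · exact hE.apply_mem_idempotentFlag_succ Φ.EsAEs_zero ih
    · exact idempotentFlag_mono (by simp) (Submodule.smul_mem _ _ ih)

theorem toMatrix_Astar_succ_succ (hAs : IsUpperBidiagonal (LinearMap.toMatrix b b Φ.Astar))
    (hflag : ∀ j : Fin (d + 1), b j ∈ idempotentFlag Φ.Estar j) (i : Fin d) :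
    LinearMap.toMatrix b b Φ.Astar i.succ i.succ = Φ.θs i.succ := by
  have hE := Φ.completeOrthogonalIdempotents_Estar
  have := Φ.finiteDimensional
  have hne := hE.apply_basis_ne_zero_of_mem_idempotentFlag Φ.Es_ne Φ.finrank_eq b hflag
    (j := i.succ) (by simp)
  have hcol := congr(Φ.Estar i.succ $(apply_basis_succ_of_isUpperBidiagonal hAs i))
  nth_rw 1 [Φ.As_eq] at hcol
  rw [hE.apply_sum_smul_apply, map_add, map_smul, map_smul,
    mem_idempotentFlag.1 (hflag i.castSucc) i.succ (by simp), smul_zero, zero_add] at hcol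
  exact (smul_left_injective K hne hcol).symm

theorem isSplitFamily_of_toMatrix (hA : IsLowerBidiagonal (LinearMap.toMatrix b b Φ.A))
    (hAs : IsUpperBidiagonal (LinearMap.toMatrix b b Φ.Astar))
    (hsup : ∀ i : Fin d, LinearMap.toMatrix b b Φ.Astar i.castSucc i.succ = 1)
    (hlast : LinearMap.toMatrix b b Φ.A (Fin.last d) (Fin.last d) = Φ.θ 0)
    (hzero : LinearMap.toMatrix b b Φ.Astar 0 0 = Φ.θs 0) : IsSplitFamily Φ b := by
  have hflag := mem_idempotentFlag_Estar_of_isLowerBidiagonal hA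
    (by rw [apply_basis_zero_of_isUpperBidiagonal hAs, hzero])
  refine ⟨b.ne_zero _, ?_, fun i hi => ?_⟩
  · have h := apply_basis_last_of_isLowerBidiagonal hA
    rw [hlast, Φ.A_eq, Φ.completeOrthogonalIdempotents_E.sum_smul_apply_eq_smul_iff Φ.θ_inj] at h
    exact ⟨_, Φ.completeOrthogonalIdempotents_E.apply_eq_self_of_forall_ne h⟩
  · have hcol := apply_basis_succ_of_isUpperBidiagonal hAs ⟨i, hi⟩
    rw [hsup, one_smul, toMatrix_Astar_succ_succ hAs hflag] at hcol
    change b (Fin.castSucc ⟨i, hi⟩) = (Φ.Astar - Φ.θs (Fin.succ ⟨i, hi⟩) • 1) (b (Fin.succ ⟨i, hi⟩))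
    rw [LinearMap.sub_apply, hcol, LinearMap.smul_apply, Module.End.one_apply,
      add_sub_cancel_right]

end THSystem

end

/-- A basis `b` is a `Φ`-split basis iff the matrix `C` of `A` is lower
bidiagonal, the matrix `C*` of `A*` is upper bidiagonal with superdiagonal
entries `1`, and `C_{dd} = θ_0`, `C*_{00} = θ*_0`. -/
theorem splitBasis_matrix_characterization {K V : Type*} [Field K] [AddCommGroup V]
    [Module K V] {d : ℕ} (Φ : THSystem K V d) (b : Module.Basis (Fin (d + 1)) K V) :
    IsSplitBasis Φ ⇑b ↔
      (IsLowerBidiagonal (LinearMap.toMatrix b b Φ.A) ∧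
       IsUpperBidiagonal (LinearMap.toMatrix b b Φ.Astar) ∧
       (∀ i : Fin (d + 1), ∀ hi : 1 ≤ (i : ℕ),
         LinearMap.toMatrix b b Φ.Astar ⟨(i : ℕ) - 1, by have := i.isLt; omega⟩ i = 1) ∧
       LinearMap.toMatrix b b Φ.A (Fin.last d) (Fin.last d) = Φ.θ 0 ∧
       LinearMap.toMatrix b b Φ.Astar 0 0 = Φ.θs 0) := by
  refine ⟨fun ⟨_, _, h⟩ => ⟨h.isLowerBidiagonal_toMatrix_A, h.isUpperBidiagonal_toMatrix_Astar,
    fun i hi => ?_, ?_, ?_⟩, fun ⟨hA, hAs, hsup, hlast, hzero⟩ => ⟨b.linearIndependent, b.span_eq,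
    THSystem.isSplitFamily_of_toMatrix hA hAs (fun i => hsup i.succ i.succ_pos) hlast hzero⟩⟩
  · rw [h.toMatrix_Astar_apply, if_pos (by simp only; omega)]
  · simp [LinearMap.toMatrix_apply, h.A_apply_last]
  · simp [h.toMatrix_Astar_apply]
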